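/- arXiv:2403.12826 — 2 statements merged into one kernel-verified Lean document; each statement's English description precedes it below -/
import Mathlib

section
/- DEIM selection conditioning bound: if the DEIM algorithm is applied to a matrix U ∈ ℝ^{n×r} with orthonormal columns to select row indices I, then ‖(U(I,:))^{-1}‖₂ ≤ (1+√(2n))^{r-1} / ‖u₁‖_∞, where u₁ is the first column of U; in particular U(I,:) is invertible. -/
/-!
Write `A_m` for the `m × m` matrix of the first `m` columns of `U` at the first `m` DEIM indices,
and `c`, `R` for the interpolation coefficients and the residual of the next column. Then
`A_{m+1}` is `A_m` bordered by a new column `b`, row `gᵀ` and corner `d`, and its Schur complement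
`d - gᵀ A_m⁻¹ b` is the residual entry `R z` at the newly selected index `z`, so block elimination
gives `‖A_{m+1}⁻¹‖ ≤ ‖A_m⁻¹‖ + ‖(c, -1)‖ ‖(A_m⁻ᵀ g, -1)‖ / |R z|`. Orthonormality of the columns
gives `‖(c, -1)‖ = ‖R‖₂ ≤ √n |R z|` (as `z` maximizes `|R|`), `‖g‖ ≤ 1` and `‖A_m‖ ≤ 1`, hence
`1 ≤ ‖A_m⁻¹‖` and `‖(A_m⁻ᵀ g, -1)‖ ≤ √2 ‖A_m⁻¹‖`. Each step therefore multiplies the bound by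
`1 + √(2n)`, starting from `‖A_1⁻¹‖ = 1 / ‖u₁‖_∞`.
-/

open Matrix

/-- Index of a maximizer of `|R|` over `Fin n`. -/
noncomputable def argmaxAbs {n : ℕ} [NeZero n] (R : Fin n → ℝ) : Fin n :=
  Classical.choose
    (Finset.exists_max_image Finset.univ (fun x => |R x|) Finset.univ_nonempty)

/-- The DEIM greedy selection: the first index maximizes `|u₁|`; at step `m`,
interpolate the next column on the previously selected indices, form the
residual, and select the index of its largest absolute entry. `Ucol j` is the
`j`-th column. -/
noncomputable def deimStep (n : ℕ) [NeZero n] (Ucol : ℕ → Fin n → ℝ) :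
    (m : ℕ) → Fin m → Fin n
  | 0 => Fin.elim0
  | m + 1 => fun i =>
    if h : (i : ℕ) < m then deimStep n Ucol m ⟨i, h⟩
    else
      let prev := deimStep n Ucol m
      let c : Fin m → ℝ :=
        (Matrix.of fun a b : Fin m => Ucol b (prev a))⁻¹.mulVec
          fun a => Ucol m (prev a)
      argmaxAbs fun x => Ucol m x - ∑ b : Fin m, Ucol b x * c b

/-- The DEIM row indices selected from the columns of `U`. -/
noncomputable def deimSelect {n r : ℕ} [NeZero n]
    (U : Matrix (Fin n) (Fin r) ℝ) : Fin r → Fin n :=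
  deimStep n (fun j x => if h : j < r then U x ⟨j, h⟩ else 0) r

open scoped Matrix.Norms.L2Operator
open WithLp (toLp)

namespace Matrix

variable {ι κ : Type*} [Fintype ι] [Fintype κ]

lemma norm_toLp_comp_le {ι' : Type*} [Fintype ι'] (f : ι → ℝ) {p : ι' → ι}
    (hp : Function.Injective p) : ‖toLp 2 (f ∘ p)‖ ≤ ‖toLp 2 f‖ := by
  classical
  simp only [EuclideanSpace.norm_eq, Real.norm_eq_abs, sq_abs]
  gcongr
  change ∑ x, f (p x) ^ 2 ≤ _
  rw [← Finset.sum_image (f := fun x => f x ^ 2) hp.injOn]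
  exact Finset.sum_le_sum_of_subset_of_nonneg (Finset.subset_univ _) fun _ _ _ => sq_nonneg _

lemma sq_norm_toLp (v : ι → ℝ) : ‖toLp 2 v‖ ^ 2 = v ⬝ᵥ v := by
  rw [EuclideanSpace.real_norm_sq_eq]
  simp [dotProduct, sq]

lemma abs_dotProduct_le (u v : ι → ℝ) : |u ⬝ᵥ v| ≤ ‖toLp 2 u‖ * ‖toLp 2 v‖ := by
  simpa [EuclideanSpace.inner_toLp_toLp, dotProduct_comm] using
    abs_real_inner_le_norm (toLp 2 u) (toLp 2 v)

lemma norm_toLp_snoc_sq {m : ℕ} (v : Fin m → ℝ) (a : ℝ) :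
    ‖toLp 2 (Fin.snoc v a : Fin (m + 1) → ℝ)‖ ^ 2 = ‖toLp 2 v‖ ^ 2 + a ^ 2 := by
  simp [EuclideanSpace.real_norm_sq_eq, Fin.sum_univ_castSucc]

variable [DecidableEq κ]

lemma norm_toLp_mulVec_le (A : Matrix ι κ ℝ) (v : κ → ℝ) :
    ‖toLp 2 (A *ᵥ v)‖ ≤ ‖A‖ * ‖toLp 2 v‖ :=
  A.l2_opNorm_mulVec (toLp 2 v)

lemma l2_opNorm_le_bound (A : Matrix ι κ ℝ) {C : ℝ} (hC : 0 ≤ C)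
    (h : ∀ v, ‖toLp 2 (A *ᵥ v)‖ ≤ C * ‖toLp 2 v‖) : ‖A‖ ≤ C := by
  rw [l2_opNorm_def]
  exact ContinuousLinearMap.opNorm_le_bound _ hC fun x => h x.ofLp

lemma l2_opNorm_transpose [DecidableEq ι] (A : Matrix ι κ ℝ) : ‖Aᵀ‖ = ‖A‖ := by
  simpa using l2_opNorm_conjTranspose A

lemma norm_toLp_vecMul_le [DecidableEq ι] (v : ι → ℝ) (A : Matrix ι κ ℝ) :
    ‖toLp 2 (v ᵥ* A)‖ ≤ ‖A‖ * ‖toLp 2 v‖ := by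
  simpa [mulVec_transpose, l2_opNorm_transpose] using norm_toLp_mulVec_le Aᵀ v

lemma norm_toLp_row_le [DecidableEq ι] (A : Matrix ι κ ℝ) (i : ι) : ‖toLp 2 (A i)‖ ≤ ‖A‖ := by
  simpa [single_one_vecMul, Matrix.row] using norm_toLp_vecMul_le (Pi.single i 1) A

lemma l2_opNorm_submatrix_le {ι' : Type*} [Fintype ι'] (A : Matrix ι κ ℝ) {p : ι' → ι}
    (hp : Function.Injective p) : ‖A.submatrix p id‖ ≤ ‖A‖ :=
  l2_opNorm_le_bound _ (norm_nonneg A) fun v =>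
    (norm_toLp_comp_le (A *ᵥ v) hp).trans (norm_toLp_mulVec_le A v)

lemma norm_toLp_mulVec_of_transpose_mul_self (W : Matrix ι κ ℝ) (hW : Wᵀ * W = 1)
    (v : κ → ℝ) : ‖toLp 2 (W *ᵥ v)‖ = ‖toLp 2 v‖ := by
  rw [← sq_eq_sq₀ (norm_nonneg _) (norm_nonneg _), sq_norm_toLp, sq_norm_toLp, dotProduct_mulVec,
    ← mulVec_transpose, mulVec_mulVec, hW, one_mulVec]

lemma l2_opNorm_le_one_of_transpose_mul_self (W : Matrix ι κ ℝ) (hW : Wᵀ * W = 1) : ‖W‖ ≤ 1 :=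
  l2_opNorm_le_bound W zero_le_one fun v => by
    rw [norm_toLp_mulVec_of_transpose_mul_self W hW, one_mul]

lemma one_le_l2_opNorm_inv [Nonempty κ] {A : Matrix κ κ ℝ} (hA : IsUnit A) (h : ‖A‖ ≤ 1) :
    1 ≤ ‖A⁻¹‖ :=
  calc (1 : ℝ) = ‖A * A⁻¹‖ := by
        rw [mul_nonsing_inv A ((isUnit_iff_isUnit_det A).mp hA), CStarRing.norm_one]
    _ ≤ ‖A‖ * ‖A⁻¹‖ := l2_opNorm_mul A A⁻¹
    _ ≤ ‖A⁻¹‖ := mul_le_of_le_one_left (norm_nonneg _) h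

lemma isUnit_and_l2_opNorm_inv_le (M : Matrix κ κ ℝ) {K : ℝ} (hK : 0 ≤ K)
    (h : ∀ v, ‖toLp 2 v‖ ≤ K * ‖toLp 2 (M *ᵥ v)‖) : IsUnit M ∧ ‖M⁻¹‖ ≤ K := by
  have hM : IsUnit M := by
    refine mulVec_injective_iff_isUnit.mp fun v w hvw => ?_
    have := h (v - w)
    rw [mulVec_sub, hvw, sub_self, WithLp.toLp_zero, norm_zero, mul_zero, norm_le_zero_iff] at this
    simpa [sub_eq_zero] using this
  refine ⟨hM, l2_opNorm_le_bound _ hK fun v => ?_⟩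
  simpa [mulVec_mulVec, mul_nonsing_inv _ ((isUnit_iff_isUnit_det M).mp hM)] using h (M⁻¹ *ᵥ v)

section Bordered

variable {m : ℕ}

/-- The bordered matrix `[[A, b], [gᵀ, d]]`. -/
def bordered (A : Matrix (Fin m) (Fin m) ℝ) (b g : Fin m → ℝ) (d : ℝ) :
    Matrix (Fin (m + 1)) (Fin (m + 1)) ℝ :=
  Matrix.of (Fin.snoc (fun i => Fin.snoc (A i) (b i)) (Fin.snoc g d))

lemma bordered_mulVec (A : Matrix (Fin m) (Fin m) ℝ) (b g : Fin m → ℝ) (d : ℝ)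
    (x : Fin (m + 1) → ℝ) :
    bordered A b g d *ᵥ x =
      Fin.snoc (A *ᵥ Fin.init x + x (Fin.last m) • b) (g ⬝ᵥ Fin.init x + d * x (Fin.last m)) := by
  ext i
  induction i using Fin.lastCases <;>
    simp [bordered, mulVec, dotProduct, Fin.sum_univ_castSucc, Fin.init, mul_comm]

lemma snoc_dotProduct_snoc (u v : Fin m → ℝ) (a b : ℝ) :
    (Fin.snoc u a : Fin (m + 1) → ℝ) ⬝ᵥ Fin.snoc v b = u ⬝ᵥ v + a * b := by
  simp [dotProduct, Fin.sum_univ_castSucc]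

/-- Block elimination: for `y = [[A, b], [gᵀ, d]] x` with Schur complement `ρ = d - gᵀ A⁻¹ b`,
the last coordinate `t` of `x` satisfies `ρ t = -(A⁻ᵀ g, -1) ⬝ y`. -/
lemma eq_of_bordered_mulVec {A : Matrix (Fin m) (Fin m) ℝ} (hA : IsUnit A) (b g : Fin m → ℝ)
    (d : ℝ) (hρ : d - g ⬝ᵥ (A⁻¹ *ᵥ b) ≠ 0) (x : Fin (m + 1) → ℝ) :
    x = Fin.snoc (A⁻¹ *ᵥ Fin.init (bordered A b g d *ᵥ x)) 0 +
      ((d - g ⬝ᵥ (A⁻¹ *ᵥ b))⁻¹ * (Fin.snoc (g ᵥ* A⁻¹) (-1) ⬝ᵥ bordered A b g d *ᵥ x)) •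
        Fin.snoc (A⁻¹ *ᵥ b) (-1) := by
  have hsolve : A⁻¹ *ᵥ (A *ᵥ Fin.init x + x (Fin.last m) • b) =
      Fin.init x + x (Fin.last m) • (A⁻¹ *ᵥ b) := by
    rw [mulVec_add, mulVec_mulVec, nonsing_inv_mul A ((isUnit_iff_isUnit_det A).mp hA),
      one_mulVec, mulVec_smul]
  rw [bordered_mulVec, Fin.init_snoc, snoc_dotProduct_snoc, ← dotProduct_mulVec, hsolve]
  ext i
  induction i using Fin.lastCases with
  | last =>
    simp only [Pi.add_apply, Fin.snoc_last, Pi.smul_apply, smul_eq_mul, dotProduct_add,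
      dotProduct_smul]
    field_simp
    ring
  | cast i =>
    simp only [Pi.add_apply, Fin.snoc_castSucc, Pi.smul_apply, smul_eq_mul, dotProduct_add,
      dotProduct_smul]
    field_simp
    simp only [Fin.init, neg_add_rev]
    ring

lemma isUnit_bordered_and_l2_opNorm_inv_le {A : Matrix (Fin m) (Fin m) ℝ} (hA : IsUnit A)
    (b g : Fin m → ℝ) (d : ℝ) (hρ : d - g ⬝ᵥ (A⁻¹ *ᵥ b) ≠ 0) :
    IsUnit (bordered A b g d) ∧ ‖(bordered A b g d)⁻¹‖ ≤ ‖A⁻¹‖ +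
      ‖toLp 2 (Fin.snoc (A⁻¹ *ᵥ b) (-1) : Fin (m + 1) → ℝ)‖ *
        ‖toLp 2 (Fin.snoc (g ᵥ* A⁻¹) (-1) : Fin (m + 1) → ℝ)‖ / |d - g ⬝ᵥ (A⁻¹ *ᵥ b)| := by
  set ρ := d - g ⬝ᵥ (A⁻¹ *ᵥ b)
  set vc : Fin (m + 1) → ℝ := Fin.snoc (A⁻¹ *ᵥ b) (-1)
  set vw : Fin (m + 1) → ℝ := Fin.snoc (g ᵥ* A⁻¹) (-1)
  refine isUnit_and_l2_opNorm_inv_le _ (by positivity) fun x => ?_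
  set y := bordered A b g d *ᵥ x
  have hhead : ‖toLp 2 (Fin.snoc (A⁻¹ *ᵥ Fin.init y) 0 : Fin (m + 1) → ℝ)‖ ≤
      ‖A⁻¹‖ * ‖toLp 2 y‖ := by
    have h0 := norm_toLp_snoc_sq (A⁻¹ *ᵥ Fin.init y) 0
    rw [zero_pow two_ne_zero, add_zero, sq_eq_sq₀ (norm_nonneg _) (norm_nonneg _)] at h0
    rw [h0]
    exact (norm_toLp_mulVec_le _ _).trans
      (mul_le_mul_of_nonneg_left (norm_toLp_comp_le y (Fin.castSucc_injective m)) (norm_nonneg _))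
  have hcoef : |ρ⁻¹ * (vw ⬝ᵥ y)| ≤ |ρ|⁻¹ * (‖toLp 2 vw‖ * ‖toLp 2 y‖) := by
    rw [abs_mul, abs_inv]
    exact mul_le_mul_of_nonneg_left (abs_dotProduct_le vw y) (by positivity)
  calc ‖toLp 2 x‖
      = ‖toLp 2 (Fin.snoc (A⁻¹ *ᵥ Fin.init y) 0 : Fin (m + 1) → ℝ) +
          (ρ⁻¹ * (vw ⬝ᵥ y)) • toLp 2 vc‖ := by
        conv_lhs => rw [eq_of_bordered_mulVec hA b g d hρ x]
        rfl
    _ ≤ ‖A⁻¹‖ * ‖toLp 2 y‖ + |ρ|⁻¹ * (‖toLp 2 vw‖ * ‖toLp 2 y‖) * ‖toLp 2 vc‖ := by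
        refine (norm_add_le _ _).trans (add_le_add hhead ?_)
        rw [norm_smul, Real.norm_eq_abs]
        exact mul_le_mul_of_nonneg_right hcoef (norm_nonneg _)
    _ = (‖A⁻¹‖ + ‖toLp 2 vc‖ * ‖toLp 2 vw‖ / |ρ|) * ‖toLp 2 y‖ := by
        ring

end Bordered

end Matrix

section ArgmaxAbs

variable {n : ℕ} [NeZero n] (f : Fin n → ℝ)

lemma argmaxAbs_spec (x : Fin n) : |f x| ≤ |f (argmaxAbs f)| :=
  (Classical.choose_spec
    (Finset.exists_max_image Finset.univ (fun x => |f x|) Finset.univ_nonempty)).2 x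
    (Finset.mem_univ x)

lemma abs_argmaxAbs :
    |f (argmaxAbs f)| = Finset.univ.sup' Finset.univ_nonempty fun x => |f x| :=
  le_antisymm (Finset.le_sup' (fun x => |f x|) (Finset.mem_univ _))
    (Finset.sup'_le _ _ fun x _ => argmaxAbs_spec f x)

lemma norm_toLp_le_sqrt_mul_abs_argmaxAbs : ‖toLp 2 f‖ ≤ √n * |f (argmaxAbs f)| := by
  rw [← Real.sqrt_sq (abs_nonneg (f _)), ← Real.sqrt_mul (Nat.cast_nonneg n),
    EuclideanSpace.norm_eq]
  refine Real.sqrt_le_sqrt ?_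
  calc ∑ x, ‖(toLp 2 f) x‖ ^ 2 ≤ ∑ _x : Fin n, |f (argmaxAbs f)| ^ 2 := by
        gcongr with x
        exact argmaxAbs_spec f x
    _ = n * |f (argmaxAbs f)| ^ 2 := by simp

end ArgmaxAbs

section Deim

variable {n : ℕ} (Ucol : ℕ → Fin n → ℝ)

def colMat (m : ℕ) : Matrix (Fin n) (Fin m) ℝ := Matrix.of fun x j => Ucol j x

lemma transpose_mul_self_colMat_of_le {m k : ℕ} (hmk : m ≤ k)
    (h : (colMat Ucol k)ᵀ * colMat Ucol k = 1) : (colMat Ucol m)ᵀ * colMat Ucol m = 1 := by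
  have : colMat Ucol m = (colMat Ucol k).submatrix id (Fin.castLE hmk) := rfl
  rw [this, transpose_submatrix, ← submatrix_mul _ _ _ _ _ Function.bijective_id, h,
    submatrix_one _ (Fin.castLE_injective hmk)]

variable [NeZero n]

noncomputable def deimMatrix (m : ℕ) : Matrix (Fin m) (Fin m) ℝ :=
  (colMat Ucol m).submatrix (deimStep n Ucol m) id

noncomputable def deimCoeff (m : ℕ) : Fin m → ℝ :=
  (deimMatrix Ucol m)⁻¹ *ᵥ fun a => Ucol m (deimStep n Ucol m a)

noncomputable def deimResidual (m : ℕ) : Fin n → ℝ :=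
  Ucol m - colMat Ucol m *ᵥ deimCoeff Ucol m

lemma deimStep_succ (m : ℕ) :
    deimStep n Ucol (m + 1) = Fin.snoc (deimStep n Ucol m) (argmaxAbs (deimResidual Ucol m)) := by
  funext i
  induction i using Fin.lastCases with
  | last =>
    simp only [deimStep, Fin.val_last, lt_self_iff_false, ↓reduceDIte, Fin.snoc_last]
    rfl
  | cast i => simp [deimStep]

lemma deimMatrix_succ (m : ℕ) :
    deimMatrix Ucol (m + 1) =
      bordered (deimMatrix Ucol m) (fun a => Ucol m (deimStep n Ucol m a))
        (colMat Ucol m (argmaxAbs (deimResidual Ucol m)))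
        (Ucol m (argmaxAbs (deimResidual Ucol m))) := by
  ext i j
  induction i using Fin.lastCases <;> induction j using Fin.lastCases <;>
    simp [deimMatrix, bordered, colMat, deimStep_succ]

lemma deimResidual_eq_neg_mulVec (m : ℕ) :
    deimResidual Ucol m = -(colMat Ucol (m + 1) *ᵥ Fin.snoc (deimCoeff Ucol m) (-1)) := by
  ext x
  simp only [deimResidual, colMat, Pi.sub_apply, mulVec, dotProduct, of_apply, Pi.neg_apply,
    Fin.sum_univ_castSucc, Fin.val_castSucc, Fin.snoc_castSucc, Fin.val_last, Fin.snoc_last]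
  ring

lemma deimResidual_deimStep {m : ℕ} (hA : IsUnit (deimMatrix Ucol m)) (a : Fin m) :
    deimResidual Ucol m (deimStep n Ucol m a) = 0 := by
  have hsel : (colMat Ucol m *ᵥ deimCoeff Ucol m) (deimStep n Ucol m a) =
      (deimMatrix Ucol m *ᵥ deimCoeff Ucol m) a := rfl
  rw [deimResidual, Pi.sub_apply, hsel, deimCoeff, mulVec_mulVec,
    mul_nonsing_inv _ ((isUnit_iff_isUnit_det _).mp hA), one_mulVec, sub_self]

lemma norm_deimResidual {m : ℕ} (hW : (colMat Ucol (m + 1))ᵀ * colMat Ucol (m + 1) = 1) :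
    ‖toLp 2 (deimResidual Ucol m)‖ =
      ‖toLp 2 (Fin.snoc (deimCoeff Ucol m) (-1) : Fin (m + 1) → ℝ)‖ := by
  rw [deimResidual_eq_neg_mulVec, WithLp.toLp_neg, norm_neg,
    norm_toLp_mulVec_of_transpose_mul_self _ hW]

lemma deimResidual_argmaxAbs_ne_zero {m : ℕ}
    (hW : (colMat Ucol (m + 1))ᵀ * colMat Ucol (m + 1) = 1) :
    deimResidual Ucol m (argmaxAbs (deimResidual Ucol m)) ≠ 0 := by
  have hsq := norm_toLp_snoc_sq (deimCoeff Ucol m) (-1)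
  have hR := norm_toLp_le_sqrt_mul_abs_argmaxAbs (deimResidual Ucol m)
  rw [norm_deimResidual Ucol hW] at hR
  intro h0
  rw [h0, abs_zero, mul_zero] at hR
  rw [le_antisymm hR (norm_nonneg _)] at hsq
  nlinarith [sq_nonneg ‖toLp 2 (deimCoeff Ucol m)‖]

lemma injective_deimStep_succ {m : ℕ} (hW : (colMat Ucol (m + 1))ᵀ * colMat Ucol (m + 1) = 1)
    (hp : Function.Injective (deimStep n Ucol m)) (hA : IsUnit (deimMatrix Ucol m)) :
    Function.Injective (deimStep n Ucol (m + 1)) := by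
  rw [deimStep_succ]
  refine Fin.snoc_injective_of_injective hp ?_
  rintro ⟨a, ha⟩
  exact deimResidual_argmaxAbs_ne_zero Ucol hW (ha ▸ deimResidual_deimStep Ucol hA a)

lemma isUnit_deimMatrix_succ_and_norm_inv_le {m : ℕ}
    (hW : (colMat Ucol (m + 1))ᵀ * colMat Ucol (m + 1) = 1) (hA : IsUnit (deimMatrix Ucol m)) :
    IsUnit (deimMatrix Ucol (m + 1)) ∧
      ‖(deimMatrix Ucol (m + 1))⁻¹‖ ≤ ‖(deimMatrix Ucol m)⁻¹‖ +
        ‖toLp 2 (Fin.snoc (deimCoeff Ucol m) (-1) : Fin (m + 1) → ℝ)‖ *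
          ‖toLp 2 (Fin.snoc (colMat Ucol m (argmaxAbs (deimResidual Ucol m)) ᵥ*
            (deimMatrix Ucol m)⁻¹) (-1) : Fin (m + 1) → ℝ)‖ /
          |deimResidual Ucol m (argmaxAbs (deimResidual Ucol m))| := by
  rw [deimMatrix_succ]
  exact isUnit_bordered_and_l2_opNorm_inv_le hA _ _ _ (deimResidual_argmaxAbs_ne_zero Ucol hW)

lemma norm_inv_deimMatrix_succ_le {m : ℕ} [NeZero m]
    (hW : (colMat Ucol (m + 1))ᵀ * colMat Ucol (m + 1) = 1)
    (hp : Function.Injective (deimStep n Ucol m)) (hA : IsUnit (deimMatrix Ucol m)) :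
    ‖(deimMatrix Ucol (m + 1))⁻¹‖ ≤ (1 + √(2 * n)) * ‖(deimMatrix Ucol m)⁻¹‖ := by
  set z := argmaxAbs (deimResidual Ucol m)
  set B := (deimMatrix Ucol m)⁻¹
  have hV := transpose_mul_self_colMat_of_le Ucol m.le_succ hW
  have hV1 := l2_opNorm_le_one_of_transpose_mul_self _ hV
  have hB : 1 ≤ ‖B‖ := one_le_l2_opNorm_inv hA ((l2_opNorm_submatrix_le _ hp).trans hV1)
  have hρ : 0 < |deimResidual Ucol m z| := abs_pos.mpr (deimResidual_argmaxAbs_ne_zero Ucol hW)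
  have hc : ‖toLp 2 (Fin.snoc (deimCoeff Ucol m) (-1) : Fin (m + 1) → ℝ)‖ ≤
      √n * |deimResidual Ucol m z| := by
    rw [← norm_deimResidual Ucol hW]
    exact norm_toLp_le_sqrt_mul_abs_argmaxAbs _
  have hw : ‖toLp 2 (Fin.snoc (colMat Ucol m z ᵥ* B) (-1) : Fin (m + 1) → ℝ)‖ ≤ √2 * ‖B‖ := by
    have hw' : ‖toLp 2 (colMat Ucol m z ᵥ* B)‖ ≤ ‖B‖ :=
      (norm_toLp_vecMul_le _ B).trans
        (mul_le_of_le_one_right (norm_nonneg B) ((norm_toLp_row_le _ z).trans hV1))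
    refine pow_le_pow_iff_left₀ (norm_nonneg _) (by positivity) two_ne_zero |>.mp ?_
    rw [norm_toLp_snoc_sq, mul_pow, Real.sq_sqrt zero_le_two]
    nlinarith [norm_nonneg (toLp 2 (colMat Ucol m z ᵥ* B))]
  calc ‖(deimMatrix Ucol (m + 1))⁻¹‖
      ≤ ‖B‖ + √n * |deimResidual Ucol m z| * (√2 * ‖B‖) / |deimResidual Ucol m z| := by
        refine (isUnit_deimMatrix_succ_and_norm_inv_le Ucol hW hA).2.trans ?_
        gcongr
    _ = (1 + √(2 * n)) * ‖B‖ := by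
        rw [Real.sqrt_mul zero_le_two]
        field_simp

lemma deim_stage_one (hW : (colMat Ucol 1)ᵀ * colMat Ucol 1 = 1) :
    Function.Injective (deimStep n Ucol 1) ∧ IsUnit (deimMatrix Ucol 1) ∧
      ‖(deimMatrix Ucol 1)⁻¹‖ ≤ 1 / Finset.univ.sup' Finset.univ_nonempty fun x => |Ucol 0 x| := by
  obtain ⟨hA, hle⟩ := isUnit_deimMatrix_succ_and_norm_inv_le Ucol hW (isUnit_of_subsingleton _)
  refine ⟨Function.injective_of_subsingleton _, hA, hle.trans_eq ?_⟩
  have hR : deimResidual Ucol 0 = Ucol 0 := by simp [deimResidual]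
  have hnorm (v : Fin 0 → ℝ) : ‖toLp 2 (Fin.snoc v (-1) : Fin 1 → ℝ)‖ = 1 := by
    simp [EuclideanSpace.norm_eq, Fin.snoc]
  rw [hnorm, hnorm, abs_argmaxAbs, hR, Subsingleton.elim (deimMatrix Ucol 0)⁻¹ 0, norm_zero]
  ring

lemma deim_stage {r : ℕ} (hU : (colMat Ucol r)ᵀ * colMat Ucol r = 1) {m : ℕ} (hm1 : 1 ≤ m)
    (hmr : m ≤ r) :
    Function.Injective (deimStep n Ucol m) ∧ IsUnit (deimMatrix Ucol m) ∧
      ‖(deimMatrix Ucol m)⁻¹‖ ≤ (1 + √(2 * n)) ^ (m - 1) /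
        Finset.univ.sup' Finset.univ_nonempty fun x => |Ucol 0 x| := by
  induction m, hm1 using Nat.le_induction with
  | base => simpa using deim_stage_one Ucol (transpose_mul_self_colMat_of_le Ucol hmr hU)
  | succ m hm1 ih =>
    have : NeZero m := ⟨by omega⟩
    have hW := transpose_mul_self_colMat_of_le Ucol hmr hU
    obtain ⟨hp, hA, hle⟩ := ih (by omega)
    refine ⟨injective_deimStep_succ Ucol hW hp hA,
      (isUnit_deimMatrix_succ_and_norm_inv_le Ucol hW hA).1,
      (norm_inv_deimMatrix_succ_le Ucol hW hp hA).trans ?_⟩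
    calc (1 + √(2 * n)) * ‖(deimMatrix Ucol m)⁻¹‖
        ≤ (1 + √(2 * n)) * ((1 + √(2 * n)) ^ (m - 1) /
            Finset.univ.sup' Finset.univ_nonempty fun x => |Ucol 0 x|) := by
          gcongr
      _ = (1 + √(2 * n)) ^ (m + 1 - 1) /
            Finset.univ.sup' Finset.univ_nonempty fun x => |Ucol 0 x| := by
          rw [show m + 1 - 1 = m - 1 + 1 by omega, pow_succ']
          ring

end Deim

/-- DEIM conditioning bound: for `U` with orthonormal columns and DEIM-selected
row indices `I`, `U(I,:)` is invertible and
`‖U(I,:)⁻¹‖₂ ≤ (1 + √(2n))^(r−1) / ‖u₁‖_∞`. -/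
theorem deim_conditioning_bound {n r : ℕ} [NeZero n] [NeZero r]
    (U : Matrix (Fin n) (Fin r) ℝ) (hU : Uᵀ * U = 1) :
    IsUnit (U.submatrix (deimSelect U) id) ∧
    ‖LinearMap.toContinuousLinearMap
        (Matrix.toEuclideanLin (U.submatrix (deimSelect U) id)⁻¹)‖ ≤
      (1 + Real.sqrt (2 * n)) ^ (r - 1) /
        (Finset.univ.sup' Finset.univ_nonempty fun x => |U x 0|) := by
  set Ucol : ℕ → Fin n → ℝ := fun j x => if h : j < r then U x ⟨j, h⟩ else 0
  have hcol : colMat Ucol r = U := by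
    ext x j
    simp [colMat, Ucol]
  have hfirst : (fun x => |Ucol 0 x|) = fun x => |U x 0| := by
    ext x
    simp [Ucol, NeZero.pos r]
  obtain ⟨-, hA, hle⟩ := deim_stage Ucol (hcol ▸ hU) NeZero.one_le le_rfl
  rw [deimMatrix, hcol] at hA hle
  rw [hfirst] at hle
  exact ⟨hA, hle⟩
end

section
/- Any nonzero idempotent matrix that is not the identity has spectral norm at least 1, and its norm equals the norm of its complement: if P² = P with P ≠ 0 and P ≠ I, then ‖P‖₂ = ‖I − P‖₂ ≥ 1. -/
/-!
For an idempotent `p` on an inner product space, split `x = u + v` with `u = p x` and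
`v = x - p x ∈ ker p`. The rescaled vector `y = s • u + s⁻¹ • v`, `s = ‖v‖ / ‖u‖`, has the same
norm as `x` (the cross term `re ⟪u, v⟫` is unchanged) while `‖p y‖ = ‖v‖`; hence
`‖(1 - p) x‖ ≤ ‖p‖ * ‖x‖`. Applied to `p` and to the idempotent `1 - p` this gives `‖1 - p‖ = ‖p‖`,
and `‖p‖ ≥ 1` since `‖p‖ = ‖p * p‖ ≤ ‖p‖ ^ 2`.
-/

open Matrix

/-- Spectral (operator 2-) norm of a matrix. -/
noncomputable def opNorm {m n : Type*} [Fintype m] [Fintype n] [DecidableEq n]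
    (A : Matrix m n ℝ) : ℝ :=
  ‖LinearMap.toContinuousLinearMap (Matrix.toEuclideanLin A)‖

theorem IsIdempotentElem.one_le_norm {R : Type*} [NonUnitalNormedRing R] {p : R}
    (hp : IsIdempotentElem p) (h0 : p ≠ 0) : 1 ≤ ‖p‖ := by
  have hpos : 0 < ‖p‖ := norm_pos_iff.mpr h0
  have : ‖p‖ ≤ ‖p‖ * ‖p‖ := by simpa only [hp.eq] using norm_mul_le p p
  exact (le_mul_iff_one_le_left hpos).mp this

section InnerProductSpace

variable {𝕜 E : Type*} [RCLike 𝕜] [NormedAddCommGroup E] [InnerProductSpace 𝕜 E]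

theorem norm_smul_add_inv_smul_eq_norm_add {u v : E} {s : ℝ} (hs0 : s ≠ 0)
    (hs : |s| * ‖u‖ = ‖v‖) : ‖(s : 𝕜) • u + (s⁻¹ : 𝕜) • v‖ = ‖u + v‖ := by
  have hsv : |s|⁻¹ * ‖v‖ = ‖u‖ := by
    rw [← hs, ← mul_assoc, inv_mul_cancel₀ (abs_ne_zero.mpr hs0), one_mul]
  have hinner :
      RCLike.re (inner 𝕜 ((s : 𝕜) • u) ((s⁻¹ : 𝕜) • v)) = RCLike.re (inner 𝕜 u v) := by
    rw [← RCLike.ofReal_inv, inner_smul_real_left, inner_smul_real_right, smul_smul,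
      mul_inv_cancel₀ hs0, one_smul]
  refine (sq_eq_sq₀ (norm_nonneg _) (norm_nonneg _)).mp ?_
  rw [norm_add_sq (𝕜 := 𝕜), norm_add_sq (𝕜 := 𝕜), hinner, ← RCLike.ofReal_inv, norm_smul,
    norm_smul, RCLike.norm_ofReal, RCLike.norm_ofReal, abs_inv, hs, hsv]
  ring

namespace ContinuousLinearMap

theorem norm_le_opNorm_mul_norm_add (p : E →L[𝕜] E) {u v : E} (hu : p u = u) (hu0 : u ≠ 0)
    (hv : p v = 0) : ‖v‖ ≤ ‖p‖ * ‖u + v‖ := by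
  rcases eq_or_ne v 0 with rfl | hv0
  · simpa using mul_nonneg (norm_nonneg p) (norm_nonneg u)
  set s : ℝ := ‖v‖ / ‖u‖
  have hs0 : 0 < s := div_pos (norm_pos_iff.mpr hv0) (norm_pos_iff.mpr hu0)
  have hs : |s| * ‖u‖ = ‖v‖ := by
    rw [abs_of_pos hs0, div_mul_cancel₀ _ (norm_ne_zero_iff.mpr hu0)]
  have hpy : p ((s : 𝕜) • u + (s⁻¹ : 𝕜) • v) = (s : 𝕜) • u := by
    rw [map_add, map_smul, map_smul, hu, hv, smul_zero, add_zero]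
  calc ‖v‖ = ‖p ((s : 𝕜) • u + (s⁻¹ : 𝕜) • v)‖ := by
        rw [hpy, norm_smul, RCLike.norm_ofReal, hs]
    _ ≤ ‖p‖ * ‖(s : 𝕜) • u + (s⁻¹ : 𝕜) • v‖ := p.le_opNorm _
    _ = ‖p‖ * ‖u + v‖ := by rw [norm_smul_add_inv_smul_eq_norm_add hs0.ne' hs]

theorem norm_one_sub_le_of_isIdempotentElem {p : E →L[𝕜] E} (hp : IsIdempotentElem p)
    (hp0 : p ≠ 0) : ‖1 - p‖ ≤ ‖p‖ := by
  refine opNorm_le_bound _ (norm_nonneg p) fun x => ?_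
  have hx : (1 - p) x = x - p x := rfl
  rcases eq_or_ne (p x) 0 with hpx | hpx
  · rw [hx, hpx, sub_zero]
    exact le_mul_of_one_le_left (norm_nonneg x) (hp.one_le_norm hp0)
  · have hu : p (p x) = p x := congr($hp.eq x)
    have hv : p (x - p x) = 0 := by rw [map_sub, hu, sub_self]
    simpa only [hx, add_sub_cancel] using p.norm_le_opNorm_mul_norm_add hu hpx hv

theorem norm_one_sub_eq_of_isIdempotentElem {p : E →L[𝕜] E} (hp : IsIdempotentElem p)
    (hp0 : p ≠ 0) (hp1 : p ≠ 1) : ‖1 - p‖ = ‖p‖ := by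
  refine le_antisymm (norm_one_sub_le_of_isIdempotentElem hp hp0) ?_
  simpa only [sub_sub_cancel] using
    norm_one_sub_le_of_isIdempotentElem hp.one_sub (sub_ne_zero.mpr hp1.symm)

end ContinuousLinearMap

end InnerProductSpace

/-- A nonzero idempotent matrix that is not the identity has the same spectral
norm as its complement, and this norm is at least `1`. -/
theorem idempotent_norm_eq_complement {n : ℕ}
    (P : Matrix (Fin n) (Fin n) ℝ) (hP : P * P = P) (h0 : P ≠ 0) (h1 : P ≠ 1) :
    opNorm P = opNorm (1 - P) ∧ 1 ≤ opNorm P := by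
  let T := Matrix.toEuclideanCLM (n := Fin n) (𝕜 := ℝ)
  have hT : IsIdempotentElem (T P) := (show IsIdempotentElem P from hP).map T
  have hT0 : T P ≠ 0 := (map_ne_zero_iff T T.injective).mpr h0
  have hT1 : T P ≠ 1 := fun h => h1 (T.injective (h.trans (map_one T).symm))
  have hnorm : ∀ A, opNorm A = ‖T A‖ := fun _ => rfl
  rw [hnorm, hnorm, map_sub, map_one,
    ContinuousLinearMap.norm_one_sub_eq_of_isIdempotentElem hT hT0 hT1]
  exact ⟨rfl, hT.one_le_norm hT0⟩
end
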